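/- arXiv:2203.02705 — 8 statements merged into one kernel-verified Lean document; each statement's English description precedes it below -/
import Mathlib

section
/- Let N = 8n with n ≥ 1, let A = {1,...,4n} and B = {4n+1,...,8n}, and let y be the permutation of {1,...,N} swapping i and 4n+i for each 1 ≤ i ≤ 4n. If z is any permutation of {1,...,N} that maps A into A, then every cycle in the disjoint cycle decomposition of y·z has even length. -/
/-!
Colour the points of `A` white and those of `B` black. Since `z` is a bijection preserving `A`, it
also preserves `B`, so `z` keeps colours while `y` swaps them: every application of `y * z`
changes the colour. Returning to a starting point therefore takes an even number of steps, and
each cycle length of `y * z` is such a return time.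
-/

open Set

namespace Equiv.Perm

variable {α : Type*}

theorem mapsTo_compl_of_mapsTo [Finite α] (σ : Perm α) {s : Set α} (h : MapsTo σ s s) :
    MapsTo σ sᶜ sᶜ :=
  (((s.toFinite.injOn_iff_bijOn_of_mapsTo h).1 σ.injective.injOn).surjOn).mapsTo_compl
    σ.injective

theorem even_of_pow_apply_eq_self {σ : Perm α} {p : α → Prop} (hp : ∀ a, p (σ a) ↔ ¬ p a)
    {k : ℕ} {a : α} (h : (σ ^ k) a = a) : Even k := by
  have hpow : ∀ j : ℕ, p ((σ ^ j) a) ↔ (p a ↔ Even j) := by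
    intro j
    induction j with
    | zero => simp
    | succ j ih => rw [pow_succ', mul_apply, hp, ih, Nat.even_add_one]; tauto
  have hk := hpow k
  rw [h] at hk
  tauto

variable [Fintype α] [DecidableEq α]

theorem exists_pow_apply_eq_self_of_mem_cycleType {σ : Perm α} {k : ℕ} (hk : k ∈ σ.cycleType) :
    ∃ a, (σ ^ k) a = a := by
  obtain ⟨c, hc, rfl⟩ := Multiset.mem_map.mp (σ.cycleType_def ▸ hk)
  have hcycle : c.IsCycle := (mem_cycleFactorsFinset_iff.mp hc).1
  obtain ⟨a, ha, -⟩ := id hcycle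
  refine ⟨a, ?_⟩
  rw [← cycleOf_pow_apply_self, ← cycle_is_cycleOf (mem_support.mpr ha) hc, Function.comp_apply,
    ← hcycle.orderOf, pow_orderOf_eq_one, one_apply]

theorem even_of_mem_cycleType {σ : Perm α} {p : α → Prop} (hp : ∀ a, p (σ a) ↔ ¬ p a) {k : ℕ}
    (hk : k ∈ σ.cycleType) : Even k :=
  let ⟨_, ha⟩ := exists_pow_apply_eq_self_of_mem_cycleType hk
  even_of_pow_apply_eq_self hp ha

end Equiv.Perm

theorem stmt0_general (n : ℕ) (y z : Equiv.Perm (Fin (8 * n)))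
    (hy : ∀ i : Fin (8 * n),
      ((y i : Fin (8 * n)) : ℕ) = if (i : ℕ) < 4 * n then (i : ℕ) + 4 * n else (i : ℕ) - 4 * n)
    (hz : ∀ i : Fin (8 * n), (i : ℕ) < 4 * n → ((z i : Fin (8 * n)) : ℕ) < 4 * n) :
    (∀ c ∈ (y * z).cycleType, Even c) ∧ ∀ a : Fin (8 * n), (y * z) a ≠ a := by
  let A : Set (Fin (8 * n)) := {i | (i : ℕ) < 4 * n}
  have hzA : ∀ i, z i ∈ A ↔ i ∈ A := fun i =>
    ⟨fun hzi => by_contra fun hi => z.mapsTo_compl_of_mapsTo hz hi hzi, hz i⟩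
  have hyA : ∀ i, y i ∈ A ↔ i ∉ A := fun i => by
    have hyi := hy i
    have hi := i.isLt
    simp only [A, mem_ofPred_eq]
    split_ifs at hyi <;> omega
  have hflip : ∀ i, (y * z) i ∈ A ↔ i ∉ A := fun i => by
    rw [Equiv.Perm.mul_apply, hyA, hzA]
  refine ⟨fun c hc => Equiv.Perm.even_of_mem_cycleType hflip hc, fun a ha => ?_⟩
  have hfix : ((y * z) ^ 1) a = a := by rwa [pow_one]
  exact Nat.not_even_one (Equiv.Perm.even_of_pow_apply_eq_self hflip hfix)

/-- Let `N = 8n` (`n ≥ 1`), `A = {i : i < 4n}` (0-indexed), and let `y` be the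
permutation swapping `i` and `4n + i` for each `i < 4n`. If `z` maps `A` into `A`, then every
cycle in the disjoint cycle decomposition of `y * z` has even length (in particular `y * z`
has no fixed points, so every point lies in an even-length cycle). -/
theorem stmt0 (n : ℕ) (hn : 1 ≤ n) (y z : Equiv.Perm (Fin (8 * n)))
    (hy : ∀ i : Fin (8 * n),
      ((y i : Fin (8 * n)) : ℕ) = if (i : ℕ) < 4 * n then (i : ℕ) + 4 * n else (i : ℕ) - 4 * n)
    (hz : ∀ i : Fin (8 * n), (i : ℕ) < 4 * n → ((z i : Fin (8 * n)) : ℕ) < 4 * n) :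
    (∀ c ∈ (y * z).cycleType, Even c) ∧ ∀ a : Fin (8 * n), (y * z) a ≠ a :=
  stmt0_general n y z hy hz
end

section
/- Let N = 8n with n ≥ 1, let x = (1 2)(3 4)···(4n−1 4n) and y = (1 4n+1)(2 4n+2)···(4n 8n), both elements of the alternating group A_N. Then every element of the coset y·Z_{A_N}(x), where Z_{A_N}(x) is the centralizer of x in A_N, has even order. -/
/-!
A permutation `z` commuting with `x` preserves the support of `x`, which is the lower half
`{i < 4n}`, while `y` exchanges the two halves. Hence `y * z` exchanges the halves too, so its
`k`-th power returns a point to its own half exactly when `k` is even; the order is such a `k`.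
-/

namespace Equiv.Perm

variable {α : Type*} {w : Perm α} {p : α → Prop}

theorem pow_apply_iff_of_apply_iff_not (hw : ∀ a, p (w a) ↔ ¬ p a) (a : α) (k : ℕ) :
    p ((w ^ k) a) ↔ (p a ↔ Even k) := by
  induction k with
  | zero => simp
  | succ k ih => rw [pow_succ', mul_apply, hw, ih, Nat.even_add_one]; tauto

theorem even_orderOf_of_apply_iff_not (hw : ∀ a, p (w a) ↔ ¬ p a) (a : α) :
    Even (orderOf w) := by
  have h := pow_apply_iff_of_apply_iff_not hw a (orderOf w)
  rw [pow_orderOf_eq_one, one_apply] at h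
  tauto

end Equiv.Perm

/-- With `N = 8n` (`n ≥ 1`), `x = (1 2)(3 4)⋯(4n-1 4n)` and
`y = (1 4n+1)(2 4n+2)⋯(4n 8n)` (0-indexed descriptions below), every element `y * z` of the
coset `y ⬝ Z_{A_N}(x)` of the centralizer of `x` in the alternating group has even order. -/
theorem stmt3 (n : ℕ) (hn : 1 ≤ n) (x y : Equiv.Perm (Fin (8 * n)))
    (hx : ∀ i : Fin (8 * n), ((x i : Fin (8 * n)) : ℕ) =
      if (i : ℕ) < 4 * n then (if (i : ℕ) % 2 = 0 then (i : ℕ) + 1 else (i : ℕ) - 1)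
      else (i : ℕ))
    (hy : ∀ i : Fin (8 * n),
      ((y i : Fin (8 * n)) : ℕ) = if (i : ℕ) < 4 * n then (i : ℕ) + 4 * n else (i : ℕ) - 4 * n) :
    ∀ z : Equiv.Perm (Fin (8 * n)), z ∈ alternatingGroup (Fin (8 * n)) → z * x = x * z →
      Even (orderOf (y * z)) := by
  intro z _ hzx
  have mem_support_x : ∀ i, i ∈ x.support ↔ (i : ℕ) < 4 * n := fun i ↦ by
    rw [Equiv.Perm.mem_support, Ne, Fin.ext_iff, hx]
    split_ifs <;> omega
  have y_swaps_halves : ∀ i : Fin (8 * n), (y i : ℕ) < 4 * n ↔ ¬ (i : ℕ) < 4 * n := fun i ↦ by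
    rw [hy]
    split_ifs <;> omega
  refine Equiv.Perm.even_orderOf_of_apply_iff_not (p := (· ∈ x.support)) (fun i ↦ ?_)
    ⟨0, by omega⟩
  rw [Equiv.Perm.mul_apply, mem_support_x, y_swaps_halves, ← mem_support_x,
    Equiv.Perm.mem_support_iff_of_commute hzx]
end

section
/- Let N = 8n with n ≥ 2. Then the coset y·Z_{A_N}(x), with x = (1 2)···(4n−1 4n) and y = (1 4n+1)···(4n 8n), contains no element of odd order; in particular, the conjecture that each coset of the centralizer of an involution in a finite non-abelian simple group contains an odd order element fails for A_{8n}. -/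
/-!
`x` moves exactly the first half `{0, …, 4n-1}`, so everything commuting with `x` preserves
both halves, while `y` exchanges them. Hence every `w ∈ y · Z(x)` exchanges the halves, so
`w ^ k` fixes a point only for even `k`, and the order of `w` is even.
-/

namespace Equiv.Perm

theorem pow_apply_mem_iff {α : Type*} {w : Perm α} {S : Set α} (h : ∀ a, w a ∈ S ↔ a ∉ S)
    (k : ℕ) (a : α) : (w ^ k) a ∈ S ↔ (a ∈ S ↔ Even k) := by
  induction k generalizing a with
  | zero => simp
  | succ k ih =>
    rw [pow_succ', mul_apply, h, ih, Nat.even_add_one]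
    tauto

theorem even_orderOf_of_apply_mem_iff_notMem {α : Type*} [Nonempty α] {w : Perm α} {S : Set α}
    (h : ∀ a, w a ∈ S ↔ a ∉ S) : Even (orderOf w) := by
  obtain ⟨a⟩ := ‹Nonempty α›
  have := pow_apply_mem_iff h (orderOf w) a
  rw [pow_orderOf_eq_one, one_apply] at this
  tauto

end Equiv.Perm

open Equiv.Perm in
/-- With `N = 8n` (`n ≥ 2`), `x = (1 2)⋯(4n-1 4n)` and `y = (1 4n+1)⋯(4n 8n)`,
the coset `y ⬝ Z_{A_N}(x)` contains no element of odd order. -/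
theorem stmt5 (n : ℕ) (hn : 2 ≤ n) (x y : Equiv.Perm (Fin (8 * n)))
    (hx : ∀ i : Fin (8 * n), ((x i : Fin (8 * n)) : ℕ) =
      if (i : ℕ) < 4 * n then (if (i : ℕ) % 2 = 0 then (i : ℕ) + 1 else (i : ℕ) - 1)
      else (i : ℕ))
    (hy : ∀ i : Fin (8 * n),
      ((y i : Fin (8 * n)) : ℕ) = if (i : ℕ) < 4 * n then (i : ℕ) + 4 * n else (i : ℕ) - 4 * n) :
    ∀ z : Equiv.Perm (Fin (8 * n)), z ∈ alternatingGroup (Fin (8 * n)) → z * x = x * z →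
      ¬ Odd (orderOf (y * z)) := by
  intro z _ hzx
  have : Nonempty (Fin (8 * n)) := ⟨⟨0, by omega⟩⟩
  have mem_support_x (i : Fin (8 * n)) : i ∈ x.support ↔ (i : ℕ) < 4 * n := by
    rw [mem_support, Ne, ← Fin.val_inj, hx]
    split_ifs <;> omega
  have y_swaps (i : Fin (8 * n)) : y i ∈ x.support ↔ i ∉ x.support := by
    have := hy i
    rw [mem_support_x, mem_support_x]
    split_ifs at this <;> omega
  rw [Nat.not_odd_iff_even]
  refine even_orderOf_of_apply_mem_iff_notMem (S := ↑x.support) fun i => ?_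
  simpa only [mul_apply, Finset.mem_coe, y_swaps] using (mem_support_iff_of_commute hzx i).not
end

section
/- Let p ≥ 3 be prime and p ≤ n ≤ 2p−1. Let P = ⟨(1 2 ... p)⟩ ≤ A_n and let x be a p-cycle in A_n with x ∉ P. Then the coset xP contains an element that is not a p-cycle. -/
/-!
Write `C` for the support of the `p`-cycle `c`, `S` for that of `x`, and suppose every `x * c ^ k`
(`k < p`) moves exactly `p` points. Then each `x * c ^ k` fixes `#(S ∪ C) - p = #(S \ C)` points of
`S ∪ C`. On the other hand a point of `S \ C` is never fixed, and a point `i ∈ C` is fixed by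
`x * c ^ k` iff `c ^ k i = x⁻¹ i`, which happens for exactly one `k < p` when `x⁻¹ i ∈ C` (as `c`
acts regularly on `C`) and for none otherwise. Double counting gives
`p * #(S \ C) = #{i ∈ C | x⁻¹ i ∈ C} ≤ p`, so `#(S \ C) ≤ 1`. If `S \ C = ∅` then `S = C`, the
right side is `p` and the left side `0`; if `#(S \ C) = 1` then `x` stabilizes `C`, hence also
`S \ C`, and must fix its single point, which lies in `S`.
-/

open Equiv Equiv.Perm Finset

namespace Equiv.Perm

theorem IsCycleOn.card_filter_pow_apply_eq {α : Type*} [DecidableEq α] {f : Perm α}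
    {s : Finset α} (hf : f.IsCycleOn s) {a b : α} (ha : a ∈ s) (hb : b ∈ s) :
    #{k ∈ range #s | (f ^ k) a = b} = 1 := by
  obtain ⟨n, hn, rfl⟩ := hf.exists_pow_eq ha hb
  rw [card_eq_one]
  refine ⟨n, ?_⟩
  ext k
  simp only [mem_filter, mem_range, mem_singleton, hf.pow_apply_eq_pow_apply ha]
  constructor
  · rintro ⟨hk, hkn⟩
    rwa [Nat.ModEq, Nat.mod_eq_of_lt hk, Nat.mod_eq_of_lt hn] at hkn
  · rintro rfl
    exact ⟨hn, rfl⟩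

variable {α : Type*} [DecidableEq α] [Fintype α]

theorem card_filter_apply_eq_self_of_support_subset {σ : Perm α} {U : Finset α}
    (h : σ.support ⊆ U) : #{i ∈ U | σ i = i} = #U - #σ.support := by
  rw [← card_sdiff_of_subset h, sdiff_eq_filter]
  simp only [notMem_support]

theorem card_support_sdiff_ne_one {x : Perm α} {C : Finset α} (hC : ∀ i ∈ C, x⁻¹ i ∈ C) :
    #(x.support \ C) ≠ 1 := by
  intro h
  obtain ⟨a, ha⟩ := card_eq_one.mp h
  have haS : a ∈ x.support \ C := ha ▸ mem_singleton_self a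
  rw [mem_sdiff] at haS
  have hxa : x a ∈ x.support \ C := by
    refine mem_sdiff.mpr ⟨apply_mem_support.mpr haS.1, fun hxa => haS.2 ?_⟩
    simpa using hC _ hxa
  rw [ha, mem_singleton] at hxa
  exact mem_support.mp haS.1 hxa

variable {c : Perm α}

theorem mul_pow_apply_ne_self {x : Perm α} {i : α} (hiC : i ∉ c.support) (hiS : i ∈ x.support)
    (k : ℕ) : (x * c ^ k) i ≠ i := by
  rw [mul_apply, pow_apply_eq_self_of_apply_eq_self (notMem_support.mp hiC)]
  exact mem_support.mp hiS

theorem IsCycle.card_filter_mul_pow_apply_eq_self (hc : c.IsCycle) (x : Perm α) {i : α}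
    (hi : i ∈ c.support) :
    #{k ∈ range #c.support | (x * c ^ k) i = i} = if x⁻¹ i ∈ c.support then 1 else 0 := by
  simp_rw [mul_apply, ← eq_inv_iff_eq (f := x)]
  split_ifs with hxi
  · have hcs := hc.isCycleOn
    rw [← coe_support_eq_set_support] at hcs
    exact hcs.card_filter_pow_apply_eq hi hxi
  · rw [card_eq_zero, filter_eq_empty_iff]
    intro k _ hk
    exact hxi (hk ▸ pow_apply_mem_support.mpr hi)

theorem IsCycle.sum_card_filter_mul_pow_apply_eq_self (hc : c.IsCycle) (x : Perm α) :
    ∑ k ∈ range #c.support, #{i ∈ x.support ∪ c.support | (x * c ^ k) i = i} =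
      #{i ∈ c.support | x⁻¹ i ∈ c.support} := by
  have := sum_card_bipartiteAbove_eq_sum_card_bipartiteBelow (s := range #c.support)
    (t := x.support ∪ c.support) (r := fun k i => (x * c ^ k) i = i)
  simp only [bipartiteAbove, bipartiteBelow] at this
  rw [this, ← sum_subset (subset_union_right (s₁ := x.support)), card_filter]
  · exact sum_congr rfl fun i hi => hc.card_filter_mul_pow_apply_eq_self x hi
  · intro i hiU hiC
    have hiS : i ∈ x.support := by simpa [hiC] using hiU
    exact card_eq_zero.mpr (filter_eq_empty_iff.mpr fun k _ => mul_pow_apply_ne_self hiC hiS k)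

theorem IsCycle.exists_card_support_mul_pow_ne (hc : c.IsCycle) {x : Perm α}
    (hx : #x.support = #c.support) : ∃ k < #c.support, #(x * c ^ k).support ≠ #c.support := by
  set C := c.support
  set D := {i ∈ C | x⁻¹ i ∈ C}
  by_contra! h
  have hcount : #C * #(x.support \ C) = #D := calc
    #C * #(x.support \ C) = ∑ _k ∈ range #C, #(x.support \ C) := by simp
    _ = ∑ k ∈ range #C, #{i ∈ x.support ∪ C | (x * c ^ k) i = i} := by
      refine sum_congr rfl fun k hk => ?_
      have hsub : (x * c ^ k).support ⊆ x.support ∪ C :=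
        (support_mul_le _ _).trans (union_subset_union subset_rfl (support_pow_le c k))
      rw [card_filter_apply_eq_self_of_support_subset hsub, h k (mem_range.mp hk),
        ← card_sdiff_add_card, Nat.add_sub_cancel]
    _ = #D := hc.sum_card_filter_mul_pow_apply_eq_self x
  have hDsub : D ⊆ C := filter_subset _ _
  have hD : #D ≤ #C := card_le_card hDsub
  have hC : 0 < #C := hc.nonempty_support.card_pos
  obtain hm | hm | hm : #(x.support \ C) = 0 ∨ #(x.support \ C) = 1 ∨ 2 ≤ #(x.support \ C) := by
    omega
  · have hSC : x.support = C :=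
      eq_of_subset_of_card_le (sdiff_eq_empty_iff_subset.mp (card_eq_zero.mp hm)) hx.ge
    have hDC : D = C := filter_true_of_mem fun i hi => by
      rw [← hSC, ← support_inv] at hi ⊢
      exact apply_mem_support.mpr hi
    rw [hm, hDC, mul_zero] at hcount
    omega
  · have hDC : D = C := eq_of_subset_of_card_le hDsub (by rw [← hcount, hm, mul_one])
    refine card_support_sdiff_ne_one (fun i hi => ?_) hm
    rw [← hDC] at hi
    exact (mem_filter.mp hi).2
  · nlinarith

end Equiv.Perm

theorem Fin.eq_cycleRange_of_val_apply {n p : ℕ} (hp : 0 < p) (hpn : p ≤ n) {c : Perm (Fin n)}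
    (hc : ∀ i : Fin n, (c i : ℕ) = if (i : ℕ) < p then ((i : ℕ) + 1) % p else (i : ℕ)) :
    c = Fin.cycleRange ⟨p - 1, by omega⟩ := by
  ext i
  rw [hc i]
  by_cases hi : (i : ℕ) < p
  · rw [if_pos hi, Fin.coe_cycleRange_of_le (Fin.le_def.mpr (by simp; omega))]
    split_ifs with h <;> simp only [Fin.ext_iff] at h
    · rw [show (i : ℕ) + 1 = p by omega, Nat.mod_self]
    · exact Nat.mod_eq_of_lt (by omega)
  · rw [if_neg hi, Fin.cycleRange_of_gt (Fin.lt_def.mpr (by simp; omega))]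

theorem stmt7_general (p n : ℕ) (hp : p.Prime) (h1 : p ≤ n)
    (c x : Equiv.Perm (Fin n))
    (hc : ∀ i : Fin n,
      ((c i : Fin n) : ℕ) = if (i : ℕ) < p then ((i : ℕ) + 1) % p else (i : ℕ))
    (hx2 : x.support.card = p) :
    ∃ τ ∈ Subgroup.zpowers c, ¬ ((x * τ).IsCycle ∧ (x * τ).support.card = p) := by
  have hp2 := hp.two_le
  have : NeZero n := ⟨by omega⟩
  have hne : (⟨p - 1, by omega⟩ : Fin n) ≠ 0 := by simp [Fin.ext_iff]; omega
  have hcr := Fin.eq_cycleRange_of_val_apply (by omega) h1 hc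
  have hcyc : c.IsCycle := hcr ▸ Fin.isCycle_cycleRange hne
  have hcard : c.support.card = p := by
    rw [← sum_cycleType, hcr, Fin.cycleType_cycleRange hne]
    simp only [Multiset.sum_singleton]
    omega
  obtain ⟨k, -, hk⟩ := hcyc.exists_card_support_mul_pow_ne (hx2.trans hcard.symm)
  exact ⟨c ^ k, pow_mem (Subgroup.mem_zpowers c) k, fun h => hk (h.2.trans hcard.symm)⟩

/-- Let `p ≥ 3` be prime and `p ≤ n ≤ 2p - 1`. Let `c` be the standard `p`-cycle
`(1 2 ... p)` (0-indexed: `c i = (i+1) % p` for `i < p`, fixing the rest), `P = ⟨c⟩ ≤ A_n`,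
and let `x ∈ A_n` be a `p`-cycle with `x ∉ P`. Then the coset `xP` contains an element that is
not a `p`-cycle. -/
theorem stmt7 (p n : ℕ) (hp : p.Prime) (hp3 : 3 ≤ p) (h1 : p ≤ n) (h2 : n ≤ 2 * p - 1)
    (c x : Equiv.Perm (Fin n))
    (hc : ∀ i : Fin n,
      ((c i : Fin n) : ℕ) = if (i : ℕ) < p then ((i : ℕ) + 1) % p else (i : ℕ))
    (hx1 : x.IsCycle) (hx2 : x.support.card = p)
    (hxA : x ∈ alternatingGroup (Fin n)) (hxP : x ∉ Subgroup.zpowers c) :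
    ∃ τ ∈ Subgroup.zpowers c, ¬ ((x * τ).IsCycle ∧ (x * τ).support.card = p) :=
  stmt7_general p n hp h1 c x hc hx2
end

section
/- Let p ≥ 3 be prime, p ≤ n ≤ 2p−1, and let P be any Sylow p-subgroup of A_n. Then no nontrivial coset of P in A_n consists entirely of p-cycles. -/
/-!
Let `σ ∈ P` have order `p`; since `n < 2p` it is a `p`-cycle, with support `B`. Suppose every
`x σ^k` is a `p`-cycle and put `U = supp x ∪ supp σ`, `u = |U| < 2p`. A point of `U` fixed by
`x σ^k` lies in `T = B ∩ x B` and satisfies `x⁻¹ b = σ^k b`; as `k` runs over `0, …, p - 1` these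
fixed-point sets partition `T`, each having `u - p` elements. Hence `|T| = p (u - p) ≤ p`, while
inclusion–exclusion gives `|T| ≥ 2p - u > 0`. So `u = p + 1` and `T = B`, i.e. `x⁻¹` preserves
`B`; but the cycle `x` meets `B` and is not contained in it, a contradiction.
-/

open Equiv Equiv.Perm Finset

namespace Equiv.Perm

variable {α : Type*} [DecidableEq α] [Fintype α] {x σ : Perm α}

lemma card_filter_apply_eq_self_of_support_subset_s8 {f : Perm α} {U : Finset α}
    (hf : f.support ⊆ U) : #(U.filter fun b => f b = b) = #U - #f.support := by
  have hsupp : U.filter (fun b => ¬ f b = b) = f.support := by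
    ext b
    simpa [mem_support] using fun hb => hf (mem_support.mpr hb)
  rw [← card_filter_add_card_filter_not (s := U) (fun b => f b = b), hsupp]
  omega

lemma pow_apply_injOn_support (hσ : σ.IsCycle) {b : α} (hb : b ∈ σ.support) {k j : ℕ}
    (hk : k < orderOf σ) (hj : j < orderOf σ) (h : (σ ^ k) b = (σ ^ j) b) : k = j := by
  have hpow : σ ^ k = σ ^ j := hσ.pow_eq_pow_iff.mpr ⟨b, mem_support.mp hb, h⟩
  rwa [pow_inj_mod, Nat.mod_eq_of_lt hk, Nat.mod_eq_of_lt hj] at hpow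

lemma mem_inter_map_of_mul_pow_apply_eq {k : ℕ} {b : α} (hb : b ∈ x.support ∪ σ.support)
    (hfix : (x * σ ^ k) b = b) : b ∈ σ.support ∩ σ.support.map x.toEmbedding := by
  have hinv : x⁻¹ b = (σ ^ k) b := by rw [inv_eq_iff_eq, ← mul_apply, hfix]
  have hbσ : b ∈ σ.support := by
    by_contra hbσ
    have hσb : (σ ^ k) b = b := pow_apply_eq_self_of_apply_eq_self (notMem_support.mp hbσ) k
    have hxb : x b = b := (inv_eq_iff_eq.mp (hinv.trans hσb)).symm
    exact (mem_union.mp hb).elim (fun h => mem_support.mp h hxb) hbσ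
  refine mem_inter.mpr ⟨hbσ, mem_map_equiv.mpr ?_⟩
  rw [← inv_def, hinv]
  exact pow_apply_mem_support.mpr hbσ

lemma exists_mul_pow_apply_eq_of_mem_inter_map (hσ : σ.IsCycle) {b : α}
    (hb : b ∈ σ.support ∩ σ.support.map x.toEmbedding) :
    ∃ k < orderOf σ, (x * σ ^ k) b = b := by
  obtain ⟨hbσ, hxb⟩ := mem_inter.mp hb
  rw [mem_map_equiv, ← inv_def] at hxb
  obtain ⟨i, hi⟩ := hσ.exists_pow_eq (mem_support.mp hbσ) (mem_support.mp hxb)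
  refine ⟨i % orderOf σ, Nat.mod_lt _ (orderOf_pos σ), ?_⟩
  rw [mul_apply, pow_mod_orderOf, hi, ← mul_apply, mul_inv_cancel, one_apply]

/-- The points `b ∈ σ.support` with `x⁻¹ b ∈ σ.support` are counted by the fixed points of the
`x * σ ^ k`: each such `b` is fixed by exactly one of them, the one with `σ ^ k b = x⁻¹ b`. -/
lemma card_inter_map_eq_sum_card_fixed (hσ : σ.IsCycle) :
    #(σ.support ∩ σ.support.map x.toEmbedding) =
      ∑ k ∈ range (orderOf σ), #((x.support ∪ σ.support).filter fun b => (x * σ ^ k) b = b) := by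
  rw [← card_biUnion]
  · congr 1
    ext b
    simp only [mem_biUnion, mem_range, mem_filter]
    constructor
    · intro hb
      obtain ⟨k, hk, hfix⟩ := exists_mul_pow_apply_eq_of_mem_inter_map hσ hb
      exact ⟨k, hk, mem_union_right _ (mem_inter.mp hb).1, hfix⟩
    · rintro ⟨k, -, hbU, hfix⟩
      exact mem_inter_map_of_mul_pow_apply_eq hbU hfix
  · intro k hk j hj hkj
    refine disjoint_left.mpr fun b hbk hbj => hkj ?_
    obtain ⟨hbU, hfixk⟩ := mem_filter.mp hbk
    obtain ⟨-, hfixj⟩ := mem_filter.mp hbj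
    have hbσ := (mem_inter.mp (mem_inter_map_of_mul_pow_apply_eq hbU hfixk)).1
    refine pow_apply_injOn_support hσ hbσ (mem_range.mp hk) (mem_range.mp hj) (x.injective ?_)
    rw [← mul_apply, ← mul_apply, hfixk, hfixj]

lemma two_mul_card_support_le_card_union_add_card_inter_map :
    2 * #σ.support ≤ #(x.support ∪ σ.support) + #(σ.support ∩ σ.support.map x.toEmbedding) := by
  have hmap : σ.support.map x.toEmbedding ⊆ x.support ∪ σ.support := by
    intro b hb
    obtain ⟨c, hc, rfl⟩ := mem_map.mp hb
    change x c ∈ _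
    by_cases hxc : x c = c
    · rw [hxc]
      exact mem_union_right _ hc
    · exact mem_union_left _ (apply_mem_support.mpr (mem_support.mpr hxc))
  have hunion := card_le_card (union_subset subset_union_right hmap)
  have hie := card_union_add_card_inter σ.support (σ.support.map x.toEmbedding)
  rw [card_map] at hie
  omega

lemma IsCycle.support_subset_of_mapsTo {B : Finset α} (hx : x.IsCycle)
    (hB : Set.MapsTo x B B) {a : α} (ha : a ∈ x.support) (haB : a ∈ B) : x.support ⊆ B := by
  intro c hc
  obtain ⟨i, rfl⟩ := hx.exists_pow_eq (mem_support.mp ha) (mem_support.mp hc)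
  rw [coe_pow]
  exact hB.iterate i haB

lemma card_union_support_eq_add_one_and_mapsTo_inv (hσ : σ.IsCycle)
    (hU : #(x.support ∪ σ.support) < 2 * #σ.support)
    (hall : ∀ k, #(x * σ ^ k).support = #σ.support) :
    #(x.support ∪ σ.support) = #σ.support + 1 ∧ Set.MapsTo ⇑x⁻¹ σ.support σ.support := by
  set m := #σ.support
  set u := #(x.support ∪ σ.support)
  set T := σ.support ∩ σ.support.map x.toEmbedding
  have hT : #T = m * (u - m) := by
    rw [card_inter_map_eq_sum_card_fixed hσ, hσ.orderOf]
    rw [sum_congr rfl fun k _ => card_filter_apply_eq_self_of_support_subset_s8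
      ((support_mul_le x _).trans (union_subset_union le_rfl (support_pow_le σ k)))]
    simp only [hall, sum_const, card_range, smul_eq_mul]
    rfl
  have hTm : #T ≤ m := card_le_card inter_subset_left
  have hlow : 2 * m ≤ u + #T := two_mul_card_support_le_card_union_add_card_inter_map
  have hm : 2 ≤ m := hσ.two_le_card_support
  have hmu : m ≤ u := card_le_card subset_union_right
  have hu : u = m + 1 := by
    have : u - m ≤ 1 := Nat.le_of_mul_le_mul_left (by omega : m * (u - m) ≤ m * 1) (by omega)
    obtain h | h : u - m = 0 ∨ u - m = 1 := by omega
    · rw [h, mul_zero] at hT; omega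
    · omega
  have hTσ : T = σ.support :=
    eq_of_subset_of_card_le inter_subset_left (by rw [hT, hu, Nat.add_sub_cancel_left, mul_one])
  refine ⟨hu, fun b hb => ?_⟩
  have hbT : b ∈ T := hTσ ▸ hb
  simpa [T, mem_map_equiv, inv_def] using (mem_inter.mp hbT).2

theorem exists_card_support_mul_pow_ne (hx : x.IsCycle) (hσ : σ.IsCycle)
    (hU : #(x.support ∪ σ.support) < 2 * #σ.support) :
    ∃ k, #(x * σ ^ k).support ≠ #σ.support := by
  by_contra! hall
  obtain ⟨hu, hinv⟩ := card_union_support_eq_add_one_and_mapsTo_inv hσ hU hall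
  have hxσ : #x.support = #σ.support := by simpa using hall 0
  obtain ⟨a, ha⟩ : (x.support ∩ σ.support).Nonempty := by
    rw [← card_pos]
    have := card_union_add_card_inter x.support σ.support
    have := hσ.two_le_card_support
    omega
  obtain ⟨hax, haσ⟩ := mem_inter.mp ha
  have hsub : x.support ⊆ σ.support := by
    simpa only [support_inv] using
      hx.inv.support_subset_of_mapsTo hinv (by rwa [support_inv]) haσ
  have := card_le_card (union_subset hsub subset_rfl)
  omega

lemma isCycle_and_card_support_of_orderOf_eq_prime {p : ℕ} (hp : p.Prime)
    (hcard : Fintype.card α < 2 * p) (hσ : orderOf σ = p) : σ.IsCycle ∧ #σ.support = p := by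
  have hcyc : σ.IsCycle :=
    isCycle_of_prime_order (hσ ▸ hp) (hσ ▸ (card_le_univ _).trans_lt hcard)
  exact ⟨hcyc, hcyc.orderOf.symm.trans hσ⟩

end Equiv.Perm

lemma prime_dvd_card_alternatingGroup {α : Type*} [DecidableEq α] [Fintype α] {p : ℕ}
    (hp : p.Prime) (hp3 : 3 ≤ p) (hcard : p ≤ Fintype.card α) :
    p ∣ Nat.card (alternatingGroup α) := by
  have : Nontrivial α := Fintype.one_lt_card_iff_nontrivial.mp (by omega)
  have hfact : p ∣ 2 * Nat.card (alternatingGroup α) := by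
    rw [two_mul_nat_card_alternatingGroup, Nat.card_perm, Nat.card_eq_fintype_card]
    exact Nat.dvd_factorial hp.pos hcard
  refine (hp.dvd_mul.mp hfact).resolve_left fun h => ?_
  exact absurd (Nat.le_of_dvd two_pos h) (by omega)

lemma Sylow.exists_mem_orderOf_eq {G : Type*} [Group G] [Finite G] {p : ℕ} [Fact p.Prime]
    (P : Sylow p G) (hdvd : p ∣ Nat.card G) : ∃ g ∈ P, orderOf g = p := by
  obtain ⟨g, hg⟩ := exists_prime_orderOf_dvd_card' p (P.dvd_card_of_dvd_card hdvd)
  exact ⟨g, g.2, (Subgroup.orderOf_coe g).trans hg⟩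

theorem stmt8_general (p n : ℕ) (hp : p.Prime) (hp3 : 3 ≤ p) (h1 : p ≤ n) (h2 : n ≤ 2 * p - 1)
    (P : Sylow p (alternatingGroup (Fin n)))
    (x : alternatingGroup (Fin n)) :
    ∃ τ ∈ (P : Subgroup (alternatingGroup (Fin n))),
      ¬ (((x * τ : alternatingGroup (Fin n)) : Equiv.Perm (Fin n)).IsCycle ∧
        ((x * τ : alternatingGroup (Fin n)) : Equiv.Perm (Fin n)).support.card = p) := by
  have : Fact p.Prime := ⟨hp⟩
  have hn : Fintype.card (Fin n) < 2 * p := by rw [Fintype.card_fin]; omega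
  obtain ⟨σ, hσP, hσ⟩ :=
    P.exists_mem_orderOf_eq (prime_dvd_card_alternatingGroup hp hp3 (by rwa [Fintype.card_fin]))
  obtain ⟨hσcyc, hσcard⟩ :=
    isCycle_and_card_support_of_orderOf_eq_prime hp hn ((Subgroup.orderOf_coe σ).trans hσ)
  by_contra! hcoset
  have hxcyc : (x : Perm (Fin n)).IsCycle := by simpa using (hcoset 1 (one_mem _)).1
  obtain ⟨k, hk⟩ := exists_card_support_mul_pow_ne hxcyc hσcyc
    (hσcard ▸ (card_le_univ _).trans_lt hn)
  exact hk ((hcoset (σ ^ k) (pow_mem hσP k)).2.trans hσcard.symm)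

/-- Let `p ≥ 3` be prime, `p ≤ n ≤ 2p - 1`, and let `P` be any Sylow `p`-subgroup
of `A_n`. Then no nontrivial coset `xP` (`x ∉ P`) consists entirely of `p`-cycles. -/
theorem stmt8 (p n : ℕ) (hp : p.Prime) (hp3 : 3 ≤ p) (h1 : p ≤ n) (h2 : n ≤ 2 * p - 1)
    (P : Sylow p (alternatingGroup (Fin n)))
    (x : alternatingGroup (Fin n)) (hx : x ∉ P) :
    ∃ τ ∈ (P : Subgroup (alternatingGroup (Fin n))),
      ¬ (((x * τ : alternatingGroup (Fin n)) : Equiv.Perm (Fin n)).IsCycle ∧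
        ((x * τ : alternatingGroup (Fin n)) : Equiv.Perm (Fin n)).support.card = p) :=
  stmt8_general p n hp hp3 h1 h2 P x
end

section
/- Let p ≥ 3 be prime and 2p ≤ n ≤ 3p−1. Let P = ⟨(1 2 ... p), (p+1 p+2 ... 2p)⟩ ≤ A_n, and let x be a p-cycle with x ∉ P. Then the coset xP contains an element whose order is not p. -/
/-!
A permutation of prime order `p` moves a positive multiple of `p` points. As `n - 2p < p`, the
support of `x` meets the support of one of the generators `c`, and for a suitable `k` the
product `x * c ^ k` moves fewer than `p` points (if `supp x ⊆ supp c`) or strictly between `p`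
and `2p` points (otherwise).
-/

open Equiv Finset

namespace Equiv.Perm

variable {α : Type*} [Fintype α] [DecidableEq α] {σ c x : Perm α} {p : ℕ}

theorem exists_card_support_eq_mul_of_orderOf_eq_prime (hp : p.Prime) (h : orderOf σ = p) :
    ∃ n, #σ.support = (n + 1) * p := by
  obtain ⟨n, hn⟩ := cycleType_prime_order (h ▸ hp)
  exact ⟨n, by rw [← sum_cycleType, hn, Multiset.sum_replicate, smul_eq_mul, h]⟩

theorem IsCycle.exists_pow_apply_eq_of_lt (hc : c.IsCycle) {i j : α} (hi : i ∈ c.support)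
    (hj : j ∈ c.support) : ∃ k < #c.support, (c ^ k) j = i := by
  obtain ⟨k, hk⟩ := hc.exists_pow_eq (mem_support.mp hj) (mem_support.mp hi)
  refine ⟨k % #c.support, Nat.mod_lt _ (card_pos.mpr ⟨i, hi⟩), ?_⟩
  rw [← hc.orderOf, pow_mod_orderOf, hk]

theorem IsCycle.eq_of_pow_apply_eq (hc : c.IsCycle) {j : α} (hj : j ∈ c.support) {k k' : ℕ}
    (hk : k < #c.support) (hk' : k' < #c.support) (h : (c ^ k) j = (c ^ k') j) : k = k' := by
  have hpow : c ^ k = c ^ k' := hc.pow_eq_pow_iff.mpr ⟨j, mem_support.mp hj, h⟩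
  rwa [pow_inj_mod, hc.orderOf, Nat.mod_eq_of_lt hk, Nat.mod_eq_of_lt hk'] at hpow

theorem IsCycle.exists_mem_apply_notMem (hx : x.IsCycle) {s : Finset α} {j₀ j₁ : α}
    (hj₀ : j₀ ∈ x.support) (hj₀s : j₀ ∈ s) (hj₁ : j₁ ∈ x.support) (hj₁s : j₁ ∉ s) :
    ∃ i ∈ s, x i ∉ s := by
  by_contra! h
  obtain ⟨t, ht⟩ := hx.exists_pow_eq (mem_support.mp hj₀) (mem_support.mp hj₁)
  have hmaps : Set.MapsTo x s s := fun i hi => h i hi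
  exact hj₁s (ht ▸ (coe_pow x t).symm ▸ hmaps.iterate t hj₀s)

theorem exists_orderOf_mul_pow_ne_of_support_subset (hp : p.Prime) (hc : c.IsCycle)
    (hcp : #c.support = p) (hsub : x.support ⊆ c.support)
    (hx : x.support.Nonempty) : ∃ k, orderOf (x * c ^ k) ≠ p := by
  obtain ⟨i, hi⟩ := hx
  obtain ⟨k, -, hk⟩ := hc.exists_pow_apply_eq_of_lt (hsub hi) (hsub (apply_mem_support.mpr hi))
  refine ⟨k, fun hord => ?_⟩
  have hfix : (x * c ^ k) (x i) = x i := by rw [mul_apply, hk]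
  have hsupp : (x * c ^ k).support ⊆ c.support.erase (x i) := by
    intro j hj
    refine mem_erase.mpr ⟨fun h => mem_support.mp hj (h ▸ hfix), ?_⟩
    rcases mem_union.mp (support_mul_le x (c ^ k) hj) with h | h
    exacts [hsub h, support_pow_le c k h]
  have hlt : #(x * c ^ k).support < p := by
    have := card_le_card hsupp
    rw [card_erase_of_mem (hsub (apply_mem_support.mpr hi)), hcp] at this
    have := hp.pos
    omega
  obtain ⟨n, hn⟩ := exists_card_support_eq_mul_of_orderOf_eq_prime hp hord
  have : p ≤ (n + 1) * p := Nat.le_mul_of_pos_left p n.succ_pos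
  omega

-- A point of `supp c` that `x` keeps in `supp c` is fixed by `x * c ^ k` for a single `k < p`.
-- As one point escapes, fewer than `p` values of `k` are spoiled, and for the others
-- `x * c ^ k` moves all of `supp x ∪ supp c`, strictly between `p` and `2p` points.
theorem exists_orderOf_mul_pow_ne_of_apply_notMem (hp : p.Prime) (hc : c.IsCycle)
    (hcp : #c.support = p) (hxp : #x.support = p) {i : α} (hi : i ∈ c.support)
    (hxi : x i ∉ c.support) : ∃ k, orderOf (x * c ^ k) ≠ p := by
  set D := c.support.filter (fun j => x j ∈ c.support)
  have hD : #D < p := by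
    have hsub : D ⊆ c.support.erase i := fun j hj =>
      mem_erase.mpr ⟨fun h => hxi (h ▸ (mem_filter.mp hj).2), (mem_filter.mp hj).1⟩
    have := card_le_card hsub
    rw [card_erase_of_mem hi, hcp] at this
    have := hp.pos
    omega
  choose! κ hκlt hκ using fun i (hi : i ∈ D) =>
    hc.exists_pow_apply_eq_of_lt (mem_filter.mp hi).1 (mem_filter.mp hi).2
  obtain ⟨k, hk, hkD⟩ : ∃ k ∈ range p, k ∉ D.image κ :=
    exists_mem_notMem_of_card_lt_card ((card_image_le).trans_lt (by rwa [card_range]))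
  refine ⟨k, fun hord => ?_⟩
  have hsupp : (x * c ^ k).support = x.support ∪ c.support := by
    refine (support_mul_le x (c ^ k)).trans (union_subset_union_right (support_pow_le c k))
      |>.antisymm fun j hj => mem_support.mpr fun hfix => ?_
    rw [mul_apply] at hfix
    by_cases hjc : j ∈ c.support
    · have hxi' : x ((c ^ k) j) ∈ c.support := by rwa [hfix]
      have hi' : (c ^ k) j ∈ D := mem_filter.mpr ⟨pow_apply_mem_support.mpr hjc, hxi'⟩
      have hκk : κ ((c ^ k) j) = k := hc.eq_of_pow_apply_eq hxi' (hcp ▸ hκlt _ hi')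
        (hcp ▸ mem_range.mp hk) (by rw [hκ _ hi', hfix])
      exact hkD (hκk ▸ mem_image_of_mem κ hi')
    · have hxj : x j ≠ j := mem_support.mp ((mem_union.mp hj).resolve_right hjc)
      rw [pow_apply_eq_self_of_apply_eq_self (notMem_support.mp hjc)] at hfix
      exact hxj hfix
  have hix : i ∈ x.support := mem_support.mpr fun h => hxi (by rwa [h])
  have hinter_pos : 0 < #(x.support ∩ c.support) := card_pos.mpr ⟨i, mem_inter.mpr ⟨hix, hi⟩⟩
  have hinter_lt : #(x.support ∩ c.support) < p := by
    have hsub : x.support ∩ c.support ⊆ x.support.erase (x i) := fun j hj =>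
      mem_erase.mpr ⟨fun h => hxi (h ▸ (mem_inter.mp hj).2), (mem_inter.mp hj).1⟩
    have := card_le_card hsub
    rw [card_erase_of_mem (apply_mem_support.mpr hix), hxp] at this
    have := hp.pos
    omega
  have hunion := card_union_add_card_inter x.support c.support
  obtain ⟨n, hn⟩ := exists_card_support_eq_mul_of_orderOf_eq_prime hp hord
  rw [hsupp] at hn
  rcases n with _ | n
  · omega
  · nlinarith

theorem exists_orderOf_mul_pow_ne_of_isCycle (hp : p.Prime) (hc : c.IsCycle)
    (hcp : #c.support = p) (hx : x.IsCycle) (hxp : #x.support = p) {j : α}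
    (hj : j ∈ x.support) (hjc : j ∈ c.support) : ∃ k, orderOf (x * c ^ k) ≠ p := by
  by_cases hsub : x.support ⊆ c.support
  · exact exists_orderOf_mul_pow_ne_of_support_subset hp hc hcp hsub ⟨j, hj⟩
  · obtain ⟨j₁, hj₁, hj₁c⟩ := not_subset.mp hsub
    obtain ⟨i, hi, hxi⟩ := hx.exists_mem_apply_notMem hj hjc hj₁ hj₁c
    exact exists_orderOf_mul_pow_ne_of_apply_notMem hp hc hcp hxp hi hxi

end Equiv.Perm

def block (m o p : ℕ) : Finset (Fin m) := {j | o ≤ (j : ℕ) ∧ (j : ℕ) < o + p}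

theorem mem_block {m o p : ℕ} {j : Fin m} : j ∈ block m o p ↔ o ≤ (j : ℕ) ∧ (j : ℕ) < o + p := by
  simp [block]

theorem card_block {m o p : ℕ} (h : o + p ≤ m) : #(block m o p) = p := by
  have : block m o p = (Ico o (o + p)).attachFin fun j hj => by rw [mem_Ico] at hj; omega := by
    ext j
    simp [mem_block]
  rw [this, card_attachFin, Nat.card_Ico, Nat.add_sub_cancel_left]

def IsBlockRotation {m : ℕ} (c : Perm (Fin m)) (o p : ℕ) : Prop :=
  ∀ j : Fin m, (c j : ℕ) = if j ∈ block m o p then o + ((j : ℕ) - o + 1) % p else j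

namespace IsBlockRotation

variable {m o p : ℕ} {c : Perm (Fin m)}

theorem apply_eq_self (hc : IsBlockRotation c o p) {j : Fin m} (hj : j ∉ block m o p) :
    c j = j :=
  Fin.ext (by rw [hc j, if_neg hj])

theorem pow_apply_val (hc : IsBlockRotation c o p) (hp : 0 < p) {j : Fin m}
    (hj : j ∈ block m o p) (k : ℕ) : ((c ^ k) j : ℕ) = o + ((j : ℕ) - o + k) % p := by
  rw [mem_block] at hj
  induction k with
  | zero => rw [pow_zero, Perm.one_apply, Nat.add_zero, Nat.mod_eq_of_lt (by omega)]; omega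
  | succ t ih =>
    have hin : (c ^ t) j ∈ block m o p := by
      rw [mem_block, ih]
      have := Nat.mod_lt ((j : ℕ) - o + t) hp
      omega
    rw [pow_succ', Perm.mul_apply, hc, if_pos hin, ih, Nat.add_sub_cancel_left, Nat.mod_add_mod,
      Nat.add_assoc]

theorem support_eq (hc : IsBlockRotation c o p) (hp : 2 ≤ p) : c.support = block m o p := by
  ext j
  rw [Perm.mem_support]
  refine ⟨fun h => by_contra fun hj => h (hc.apply_eq_self hj), fun hj h => ?_⟩
  have hval := congrArg Fin.val h
  rw [hc j, if_pos hj] at hval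
  rw [mem_block] at hj
  rcases Nat.lt_or_ge ((j : ℕ) - o + 1) p with hlt | hge
  · rw [Nat.mod_eq_of_lt hlt] at hval
    omega
  · rw [show (j : ℕ) - o + 1 = p by omega, Nat.mod_self] at hval
    omega

theorem isCycle (hc : IsBlockRotation c o p) (hp : 2 ≤ p) (hm : o + p ≤ m) : c.IsCycle := by
  have hpos : 0 < p := by omega
  let a : Fin m := ⟨o, by omega⟩
  have ha : a ∈ block m o p := mem_block.mpr ⟨le_rfl, by simp only [a]; omega⟩
  refine ⟨a, Perm.mem_support.mp (hc.support_eq hp ▸ ha), fun y hy => ?_⟩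
  have hy' : y ∈ block m o p := hc.support_eq hp ▸ Perm.mem_support.mpr hy
  refine ⟨((y : ℕ) - o : ℕ), Fin.ext ?_⟩
  rw [zpow_natCast, hc.pow_apply_val hpos ha]
  rw [mem_block] at hy'
  simp only [a, Nat.sub_self, Nat.zero_add]
  rw [Nat.mod_eq_of_lt (by omega)]
  omega

theorem exists_orderOf_mul_pow_ne (hc : IsBlockRotation c o p) (hp : p.Prime) (hm : o + p ≤ m)
    {x : Perm (Fin m)} (hx : x.IsCycle) (hxp : #x.support = p) {j : Fin m}
    (hj : j ∈ x.support) (hjc : j ∈ block m o p) : ∃ k, orderOf (x * c ^ k) ≠ p :=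
  Perm.exists_orderOf_mul_pow_ne_of_isCycle hp (hc.isCycle hp.two_le hm)
    (by rw [hc.support_eq hp.two_le, card_block hm]) hx hxp hj (hc.support_eq hp.two_le ▸ hjc)

end IsBlockRotation

theorem stmt9_general (p n : ℕ) (hp : p.Prime) (h1 : 2 * p ≤ n) (h2 : n ≤ 3 * p - 1)
    (c₁ c₂ x : Equiv.Perm (Fin n))
    (hc₁ : ∀ i : Fin n,
      ((c₁ i : Fin n) : ℕ) = if (i : ℕ) < p then ((i : ℕ) + 1) % p else (i : ℕ))
    (hc₂ : ∀ i : Fin n, ((c₂ i : Fin n) : ℕ) =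
      if (i : ℕ) < p then (i : ℕ)
      else if (i : ℕ) < 2 * p then p + (((i : ℕ) - p) + 1) % p else (i : ℕ))
    (hx1 : x.IsCycle) (hx2 : x.support.card = p) :
    ∃ τ ∈ Subgroup.closure {c₁, c₂}, orderOf (x * τ) ≠ p := by
  have hr₁ : IsBlockRotation c₁ 0 p := fun j => by
    simp only [hc₁ j, mem_block]
    split_ifs <;> first | omega | simp
  have hr₂ : IsBlockRotation c₂ p p := fun j => by
    simp only [hc₂ j, mem_block]
    split_ifs <;> omega
  suffices ∃ c ∈ ({c₁, c₂} : Set (Perm (Fin n))), ∃ k, orderOf (x * c ^ k) ≠ p by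
    obtain ⟨c, hc, k, hk⟩ := this
    exact ⟨c ^ k, pow_mem (Subgroup.subset_closure hc) k, hk⟩
  obtain ⟨j, hj, hjc⟩ : ∃ j ∈ x.support, j ∈ block n 0 p ∨ j ∈ block n p p := by
    by_contra! h
    have hsub : x.support ⊆ block n (2 * p) (n - 2 * p) := fun j hj => by
      have := h j hj
      simp only [mem_block] at this ⊢
      omega
    have := card_le_card hsub
    rw [card_block (by omega), hx2] at this
    have := hp.two_le
    omega
  rcases hjc with hjc | hjc
  · exact ⟨c₁, by simp, hr₁.exists_orderOf_mul_pow_ne hp (by omega) hx1 hx2 hj hjc⟩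
  · exact ⟨c₂, by simp, hr₂.exists_orderOf_mul_pow_ne hp (by omega) hx1 hx2 hj hjc⟩

/-- Let `p ≥ 3` be prime and `2p ≤ n ≤ 3p - 1`. Let
`P = ⟨(1 2 ... p), (p+1 p+2 ... 2p)⟩ ≤ A_n` (the two generators described 0-indexed below),
and let `x ∈ A_n` be a `p`-cycle with `x ∉ P`. Then the coset `xP` contains an element whose
order is not `p`. -/
theorem stmt9 (p n : ℕ) (hp : p.Prime) (hp3 : 3 ≤ p) (h1 : 2 * p ≤ n) (h2 : n ≤ 3 * p - 1)
    (c₁ c₂ x : Equiv.Perm (Fin n))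
    (hc₁ : ∀ i : Fin n,
      ((c₁ i : Fin n) : ℕ) = if (i : ℕ) < p then ((i : ℕ) + 1) % p else (i : ℕ))
    (hc₂ : ∀ i : Fin n, ((c₂ i : Fin n) : ℕ) =
      if (i : ℕ) < p then (i : ℕ)
      else if (i : ℕ) < 2 * p then p + (((i : ℕ) - p) + 1) % p else (i : ℕ))
    (hx1 : x.IsCycle) (hx2 : x.support.card = p)
    (hxA : x ∈ alternatingGroup (Fin n))
    (hxP : x ∉ Subgroup.closure {c₁, c₂}) :
    ∃ τ ∈ Subgroup.closure {c₁, c₂}, orderOf (x * τ) ≠ p :=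
  stmt9_general p n hp h1 h2 c₁ c₂ x hc₁ hc₂ hx1 hx2
end

section
/- Let p ≥ 3 be prime and let P = ⟨(1 2 ... p), (p+1 p+2 ... 2p)⟩ be a Sylow p-subgroup of A_{2p}. Then every nontrivial coset xP (x ∉ P) of P in A_{2p} contains an element whose order is not equal to p. -/
/-!
Suppose every element of the coset `xP` has order `p`. A permutation of order `p` of `2p` points
fixes either no point or exactly `p` points. Write `L` for the first block `{0, …, p-1}`, on which
`c₁` acts as a `p`-cycle and which `c₂` fixes pointwise (and symmetrically on the complement `Lᶜ`).
The fixed points of `x c₁ᵃ c₂ᵇ` are the points `i ∈ L` with `c₁ᵃ i = x⁻¹ i` together with the points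
`i ∈ Lᶜ` with `c₂ᵇ i = x⁻¹ i`, so their number splits as `A a + B b ∈ {0, p}`. Since `c₁` is regular
on `L`, `∑ₐ A a` counts the points of `L` that `x⁻¹` keeps in `L`; likewise `∑_b B b` for `Lᶜ`, and
both counts agree. If they were positive, `A` and `B` would be constant with `A + B = p` and
`p A = p B`, so `p` would be even. Hence `x⁻¹` interchanges `L` and `Lᶜ`, and so does its odd power
`x⁻ᵖ = 1`, which is absurd.
-/

open Equiv Finset

namespace Equiv.Perm

theorem pow_ne_one_of_forall_apply_mem_iff_notMem {α : Type*} (σ : Perm α) {S : Finset α}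
    (hS : S.Nonempty) (hσ : ∀ i, σ i ∈ S ↔ i ∉ S) {n : ℕ} (hn : Odd n) : σ ^ n ≠ 1 := by
  have hsq : ∀ i, (σ ^ 2) i ∈ S ↔ i ∈ S := by simp [sq, hσ]
  have hsq_pow : ∀ k i, ((σ ^ 2) ^ k) i ∈ S ↔ i ∈ S := by
    intro k
    induction k with
    | zero => simp
    | succ k ih => intro i; rw [pow_succ', Perm.mul_apply, hsq, ih]
  obtain ⟨k, rfl⟩ := hn
  obtain ⟨i, hi⟩ := hS
  intro h
  have := hsq_pow k (σ i)
  rw [← Perm.mul_apply, ← pow_mul, ← pow_succ, h, Perm.one_apply, hσ] at this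
  exact this.mp hi hi

variable {α : Type*} [Fintype α] [DecidableEq α]

theorem card_fixed_eq_zero_or_eq_of_orderOf_eq {p : ℕ} (hp : p.Prime)
    (hα : Fintype.card α = 2 * p) {g : Perm α} (hg : orderOf g = p) :
    #{i | g i = i} = 0 ∨ #{i | g i = i} = p := by
  have : Fact p.Prime := ⟨hp⟩
  have hfix : #{i | g i = i} = #g.supportᶜ := by congr 1; ext; simp
  have hdvd : p ∣ #g.supportᶜ :=
    ((card_compl_support_modEq (n := 1) (by rw [pow_one, ← hg, pow_orderOf_eq_one])).dvd_iff
      dvd_rfl).mpr (hα ▸ dvd_mul_left p 2)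
  have hlt : #g.supportᶜ < 2 * p := by
    have hg₁ : #g.support ≠ 0 := fun h =>
      hp.one_lt.ne' (by rw [← hg, card_support_eq_zero.mp h, orderOf_one])
    have := card_le_univ g.support
    rw [card_compl]
    omega
  obtain ⟨m, hm⟩ := hdvd
  have : m < 2 := by nlinarith
  rw [hfix]
  interval_cases m <;> simp [hm]

theorem card_fixed_mul_mul_eq_add (σ τ₁ τ₂ : Perm α) (S : Finset α)
    (h₁ : ∀ i ∉ S, τ₁ i = i) (h₂ : ∀ i ∈ S, τ₂ i = i) :
    #{i | (σ * (τ₁ * τ₂)) i = i} = #{i ∈ S | τ₁ i = σ⁻¹ i} + #{i ∈ Sᶜ | τ₂ i = σ⁻¹ i} := by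
  have h₂' : ∀ i ∉ S, τ₂ i ∉ S := fun i hi hτi => hi (τ₂.injective (h₂ _ hτi) ▸ hτi)
  rw [← card_union_of_disjoint (disjoint_filter_filter disjoint_compl_right)]
  congr 1
  ext i
  rw [mem_filter]
  simp only [mem_union, mem_filter, mem_compl, Perm.mul_apply, Perm.eq_inv_iff_eq]
  by_cases hi : i ∈ S
  · simp [hi, h₂ i hi]
  · simp [hi, h₁ _ (h₂' i hi)]

theorem card_filter_mem_eq_card_filter_mem_compl (σ : Perm α) {S : Finset α}
    (hS : #Sᶜ = #S) : #{i ∈ S | σ i ∈ S} = #{i ∈ Sᶜ | σ i ∈ Sᶜ} := by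
  have h₁ : #{i ∈ S | σ i ∈ S} + #{i ∈ Sᶜ | σ i ∈ S} = #S := by
    rw [← card_union_of_disjoint (disjoint_filter_filter disjoint_compl_right)]
    refine card_equiv σ fun i => ?_
    by_cases hi : i ∈ S <;> simp [hi]
  have h₂ := card_filter_add_card_filter_not (s := Sᶜ) (fun i => σ i ∈ S)
  simp only [← mem_compl] at h₂
  omega

end Equiv.Perm

theorem Finset.sum_card_filter_apply_eq {α ι : Type*} [DecidableEq α] [Fintype ι]
    (g : ι → α → α) (f : α → α) (S : Finset α) (hmaps : ∀ a, ∀ i ∈ S, g a i ∈ S)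
    (hreg : ∀ i ∈ S, ∀ j ∈ S, ∃! a, g a i = j) :
    ∑ a, #{i ∈ S | g a i = f i} = #{i ∈ S | f i ∈ S} := by
  simp only [card_filter]
  rw [sum_comm]
  refine sum_congr rfl fun i hi => ?_
  split_ifs with hf
  · rw [← card_filter, card_eq_one_iff_existsUnique]
    simpa using hreg i hi _ hf
  · exact sum_eq_zero fun a _ => if_neg fun h : g a i = f i => hf (h ▸ hmaps a i hi)

theorem Nat.sum_eq_zero_of_forall_add_eq_zero_or_eq {ι : Type*} [Fintype ι] {m : ℕ}
    (hm : Odd m) (A B : ι → ℕ) (hAB : ∑ a, A a = ∑ b, B b)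
    (h : ∀ a b, A a + B b = 0 ∨ A a + B b = m) : ∑ a, A a = 0 := by
  by_contra hA
  obtain ⟨a₀, -, ha₀⟩ := exists_ne_zero_of_sum_ne_zero hA
  obtain ⟨b₀, -, hb₀⟩ := exists_ne_zero_of_sum_ne_zero (hAB ▸ hA)
  have hAc : ∀ a, A a = m - B b₀ := fun a => by rcases h a b₀ with h | h <;> omega
  have hBc : ∀ b, B b = m - A a₀ := fun b => by rcases h a₀ b with h | h <;> omega
  rw [sum_congr rfl fun a _ => hAc a, sum_congr rfl fun b _ => hBc b, sum_const, sum_const,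
    Finset.card_univ, smul_eq_mul, smul_eq_mul] at hAB
  have := Nat.eq_of_mul_eq_mul_left (Fintype.card_pos_iff.mpr ⟨a₀⟩) hAB
  rcases h a₀ b₀ with h | h
  · omega
  · obtain ⟨k, rfl⟩ := hm
    omega

theorem Fin.existsUnique_add_mod_eq {p m k : ℕ} (hm : m < p) (hk : k < p) :
    ∃! a : Fin p, (m + a) % p = k := by
  have : NeZero p := ⟨by omega⟩
  have key : ∀ a : Fin p, (m + a) % p = k ↔ a = ⟨k, hk⟩ - ⟨m, hm⟩ := fun a => by
    rw [eq_sub_iff_add_eq', Fin.ext_iff, Fin.val_add]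
  simpa only [key] using existsUnique_eq

def lowerHalf (p : ℕ) : Finset (Fin (2 * p)) := {i | (i : ℕ) < p}

@[simp]
theorem mem_lowerHalf {p : ℕ} {i : Fin (2 * p)} : i ∈ lowerHalf p ↔ (i : ℕ) < p := by
  simp [lowerHalf]

theorem card_compl_lowerHalf (p : ℕ) : #(lowerHalf p)ᶜ = #(lowerHalf p) := by
  simp only [lowerHalf, card_compl, Fin.card_filter_val_lt, Fintype.card_fin]
  omega

def IsLowerRotation (p : ℕ) (c : Perm (Fin (2 * p))) : Prop :=
  ∀ i : Fin (2 * p), (c i : ℕ) = if (i : ℕ) < p then ((i : ℕ) + 1) % p else (i : ℕ)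

def IsUpperRotation (p : ℕ) (c : Perm (Fin (2 * p))) : Prop :=
  ∀ i : Fin (2 * p), (c i : ℕ) = if (i : ℕ) < p then (i : ℕ) else p + ((i : ℕ) - p + 1) % p

namespace IsLowerRotation

variable {p : ℕ} {c : Perm (Fin (2 * p))} (hc : IsLowerRotation p c)
include hc

theorem pow_val (a : ℕ) (i : Fin (2 * p)) :
    ((c ^ a) i : ℕ) = if (i : ℕ) < p then ((i : ℕ) + a) % p else (i : ℕ) := by
  induction a with
  | zero => split_ifs with hi <;> simp [Nat.mod_eq_of_lt, hi]
  | succ a ih =>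
    rw [pow_succ', Perm.mul_apply, hc, ih]
    by_cases hi : (i : ℕ) < p
    · rw [if_pos hi, if_pos hi, if_pos (Nat.mod_lt _ (by omega)), Nat.mod_add_mod, Nat.add_assoc]
    · rw [if_neg hi, if_neg hi, if_neg hi]

theorem pow_apply_of_notMem (a : ℕ) {i : Fin (2 * p)} (hi : i ∉ lowerHalf p) :
    (c ^ a) i = i := by
  rw [mem_lowerHalf] at hi
  ext
  rw [hc.pow_val, if_neg hi]

theorem sum_card_filter_pow_apply_eq (σ : Perm (Fin (2 * p))) :
    ∑ a : Fin p, #{i ∈ lowerHalf p | (c ^ (a : ℕ)) i = σ i} =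
      #{i ∈ lowerHalf p | σ i ∈ lowerHalf p} := by
  refine sum_card_filter_apply_eq _ _ _ (fun a i hi => ?_) (fun i hi j hj => ?_)
  · rw [mem_lowerHalf] at hi ⊢
    rw [hc.pow_val, if_pos hi]
    exact Nat.mod_lt _ (by omega)
  · rw [mem_lowerHalf] at hi hj
    simpa only [Fin.ext_iff, hc.pow_val, if_pos hi] using Fin.existsUnique_add_mod_eq hi hj

end IsLowerRotation

namespace IsUpperRotation

variable {p : ℕ} {c : Perm (Fin (2 * p))} (hc : IsUpperRotation p c)
include hc

theorem pow_val (a : ℕ) (i : Fin (2 * p)) :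
    ((c ^ a) i : ℕ) = if (i : ℕ) < p then (i : ℕ) else p + ((i : ℕ) - p + a) % p := by
  have := i.isLt
  induction a with
  | zero =>
    split_ifs with hi
    · rfl
    · rw [Nat.add_zero, Nat.mod_eq_of_lt (by omega), pow_zero, Perm.one_apply]
      omega
  | succ a ih =>
    rw [pow_succ', Perm.mul_apply, hc, ih]
    by_cases hi : (i : ℕ) < p
    · rw [if_pos hi, if_pos hi, if_pos hi]
    · rw [if_neg hi, if_neg hi, if_neg (by omega), Nat.add_sub_cancel_left, Nat.mod_add_mod,
        Nat.add_assoc]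

theorem pow_apply_of_mem (a : ℕ) {i : Fin (2 * p)} (hi : i ∈ lowerHalf p) : (c ^ a) i = i := by
  rw [mem_lowerHalf] at hi
  ext
  rw [hc.pow_val, if_pos hi]

theorem sum_card_filter_pow_apply_eq (σ : Perm (Fin (2 * p))) :
    ∑ b : Fin p, #{i ∈ (lowerHalf p)ᶜ | (c ^ (b : ℕ)) i = σ i} =
      #{i ∈ (lowerHalf p)ᶜ | σ i ∈ (lowerHalf p)ᶜ} := by
  refine sum_card_filter_apply_eq _ _ _ (fun b i hi => ?_) (fun i hi j hj => ?_)
  · simp only [mem_compl, mem_lowerHalf, not_lt] at hi ⊢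
    rw [hc.pow_val, if_neg (by omega)]
    omega
  · simp only [mem_compl, mem_lowerHalf, not_lt] at hi hj
    have key : ∀ b : Fin p, (c ^ (b : ℕ)) i = j ↔ ((i : ℕ) - p + b) % p = (j : ℕ) - p := by
      intro b
      rw [Fin.ext_iff, hc.pow_val, if_neg (by omega)]
      omega
    simpa only [key] using Fin.existsUnique_add_mod_eq (by omega) (by omega)

end IsUpperRotation

theorem apply_mem_lowerHalf_iff_of_forall_orderOf_eq {p : ℕ} (hp : p.Prime) (hodd : Odd p)
    {c₁ c₂ : Perm (Fin (2 * p))} (hc₁ : IsLowerRotation p c₁) (hc₂ : IsUpperRotation p c₂)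
    (x : Perm (Fin (2 * p))) (hord : ∀ a b : ℕ, orderOf (x * (c₁ ^ a * c₂ ^ b)) = p)
    (i : Fin (2 * p)) :
    x⁻¹ i ∈ lowerHalf p ↔ i ∉ lowerHalf p := by
  set L := lowerHalf p
  have hfix (a b : Fin p) : #{i ∈ L | (c₁ ^ (a : ℕ)) i = x⁻¹ i} +
      #{i ∈ Lᶜ | (c₂ ^ (b : ℕ)) i = x⁻¹ i} = 0 ∨ #{i ∈ L | (c₁ ^ (a : ℕ)) i = x⁻¹ i} +
      #{i ∈ Lᶜ | (c₂ ^ (b : ℕ)) i = x⁻¹ i} = p := by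
    rw [← Perm.card_fixed_mul_mul_eq_add x _ _ L (fun i => hc₁.pow_apply_of_notMem _)
      (fun i => hc₂.pow_apply_of_mem _)]
    exact Perm.card_fixed_eq_zero_or_eq_of_orderOf_eq hp (by simp) (hord _ _)
  have hK := Perm.card_filter_mem_eq_card_filter_mem_compl x⁻¹ (card_compl_lowerHalf p)
  have hK₁ : #{i ∈ L | x⁻¹ i ∈ L} = 0 := by
    rw [← hc₁.sum_card_filter_pow_apply_eq]
    refine Nat.sum_eq_zero_of_forall_add_eq_zero_or_eq hodd _ _ ?_ hfix
    rw [hc₁.sum_card_filter_pow_apply_eq, hc₂.sum_card_filter_pow_apply_eq, hK]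
  have hK₂ : #{i ∈ Lᶜ | x⁻¹ i ∈ Lᶜ} = 0 := hK ▸ hK₁
  rw [card_eq_zero, filter_eq_empty_iff] at hK₁ hK₂
  by_cases hi : i ∈ L
  · simpa [hi] using hK₁ hi
  · simpa [hi] using hK₂ (mem_compl.mpr hi)

/-- Let `p ≥ 3` be prime and let
`P = ⟨(1 2 ... p), (p+1 p+2 ... 2p)⟩` be the Sylow `p`-subgroup of `A_{2p}` generated by the two
standard disjoint `p`-cycles (0-indexed below). Then every nontrivial coset `xP` (`x ∈ A_{2p}`,
`x ∉ P`) contains an element whose order is not `p`. -/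
theorem stmt10 (p : ℕ) (hp : p.Prime) (hp3 : 3 ≤ p)
    (c₁ c₂ : Equiv.Perm (Fin (2 * p)))
    (hc₁ : ∀ i : Fin (2 * p),
      ((c₁ i : Fin (2 * p)) : ℕ) = if (i : ℕ) < p then ((i : ℕ) + 1) % p else (i : ℕ))
    (hc₂ : ∀ i : Fin (2 * p), ((c₂ i : Fin (2 * p)) : ℕ) =
      if (i : ℕ) < p then (i : ℕ) else p + (((i : ℕ) - p) + 1) % p) :
    ∀ x : Equiv.Perm (Fin (2 * p)), x ∈ alternatingGroup (Fin (2 * p)) →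
      x ∉ Subgroup.closure {c₁, c₂} →
      ∃ τ ∈ Subgroup.closure {c₁, c₂}, orderOf (x * τ) ≠ p := by
  intro x _ _
  by_contra! hord
  have hodd : Odd p := hp.odd_of_ne_two (by omega)
  have hswap := apply_mem_lowerHalf_iff_of_forall_orderOf_eq hp hodd hc₁ hc₂ x fun a b =>
    hord _ (mul_mem (pow_mem (Subgroup.subset_closure (by simp)) a)
      (pow_mem (Subgroup.subset_closure (by simp)) b))
  have hx : orderOf x = p := by simpa using hord 1 (one_mem _)
  refine Perm.pow_ne_one_of_forall_apply_mem_iff_notMem x⁻¹ ⟨⟨0, by omega⟩, by simp; omega⟩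
    hswap hodd ?_
  rw [inv_pow, orderOf_dvd_iff_pow_eq_one.mp hx.dvd, inv_one]
end

section
/- Let G be a finite group, p a prime, and P a Sylow p-subgroup of G. Suppose G is a group of minimal order among finite groups possessing a nontrivial coset gP (g ∉ P) all of whose elements have order a power of p. Then G is a non-abelian simple group. -/
/-!
If a proper nontrivial normal subgroup `N` existed, a smaller group would carry such a coset.
When `g ∈ N P`, write `g = n σ`; then `n (P ∩ N) ⊆ g P` is such a coset in `N`, and `P ∩ N` is
Sylow in `N`. Otherwise the image of `g P` in `G ⧸ N` is such a coset of the Sylow subgroup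
`P N / N`, since orders of images divide orders. Finally `G` is non-abelian because `P` is not
normal: the `p`-element `g` would lie in a normal Sylow `p`-subgroup.
-/

open Subgroup

def IsPElementCoset (p : ℕ) {G : Type*} [Group G] (P : Subgroup G) (g : G) : Prop :=
  g ∉ P ∧ ∀ τ ∈ P, ∃ k : ℕ, orderOf (g * τ) = p ^ k

section

variable {G : Type*} [Group G]

theorem Subgroup.exists_mul_ne_mul_of_not_normal {H : Subgroup G} (hH : ¬ H.Normal) :
    ∃ a b : G, a * b ≠ b * a := by
  by_contra! hcomm
  exact hH ⟨fun n hn x => by rwa [hcomm x n, mul_inv_cancel_right]⟩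

-- `|N : H ⊓ N| = |H ⊔ N : H|`, which divides `|G : H|`.
theorem Subgroup.relIndex_dvd_index_of_normal_right (H N : Subgroup G) [N.Normal]
    [N.FiniteIndex] : H.relIndex N ∣ H.index := by
  have hcross : N.relIndex H * H.index = H.relIndex N * N.index := by
    have h := relIndex_inf_mul_relIndex N H ⊤
    rwa [inf_top_eq, relIndex_top_right, relIndex_top_right,
      ← relIndex_mul_index (inf_le_left : N ⊓ H ≤ N), inf_relIndex_left] at h
  have hsup : N.relIndex H * (H ⊔ N).index = N.index := by
    rw [← relIndex_sup_right H N, relIndex_mul_index le_sup_right]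
  have hpos : 0 < N.relIndex H :=
    Nat.pos_of_ne_zero (mt index_eq_zero_of_relIndex_eq_zero FiniteIndex.index_ne_zero)
  refine ⟨(H ⊔ N).index, Nat.eq_of_mul_eq_mul_left hpos ?_⟩
  rw [hcross, ← hsup]
  ring

theorem Subgroup.card_lt_card_of_ne_top [Finite G] {H : Subgroup G} (hH : H ≠ ⊤) :
    Nat.card H < Nat.card G :=
  lt_of_le_of_ne H.card_le_card_group fun h => hH (eq_top_of_card_eq H h)

theorem QuotientGroup.card_quotient_lt_card [Finite G] {N : Subgroup G} [N.Normal] (hN : N ≠ ⊥) :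
    Nat.card (G ⧸ N) < Nat.card G := by
  rw [← N.card_mul_index]
  exact lt_mul_of_one_lt_left Nat.card_pos ((one_lt_card_iff_ne_bot N).mpr hN)

end

namespace Sylow

variable {p : ℕ} [Fact p.Prime] {G : Type*} [Group G] [Finite G]

def subgroupOfNormal (P : Sylow p G) (N : Subgroup G) [N.Normal] : Sylow p N :=
  (P.isPGroup'.comap_of_injective N.subtype N.subtype_injective).toSylow
    fun h => P.not_dvd_index (h.trans ((P : Subgroup G).relIndex_dvd_index_of_normal_right N))

end Sylow

namespace IsPElementCoset

variable {p : ℕ} {G : Type*} [Group G] {P : Subgroup G} {g : G}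

theorem not_normal [Fact p.Prime] [Finite G] {P : Sylow p G} (h : IsPElementCoset p P g) :
    ¬ (P : Subgroup G).Normal := by
  intro hnormal
  obtain ⟨k, hk⟩ := h.2 1 (one_mem _)
  rw [mul_one] at hk
  obtain ⟨Q, hgQ⟩ := (IsPGroup.of_card (by rw [Nat.card_zpowers, hk]) :
    IsPGroup p (zpowers g)).exists_le_sylow
  have : Subsingleton (Sylow p G) := (Sylow.unique_of_normal P hnormal).instSubsingleton
  exact h.1 (Subsingleton.elim Q P ▸ hgQ (mem_zpowers g))

theorem subgroupOf {N : Subgroup G} [N.Normal] (h : IsPElementCoset p P g) (hg : g ∈ N ⊔ P) :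
    ∃ n : N, IsPElementCoset p (P.subgroupOf N) n := by
  obtain ⟨n, hn, σ, hσ, rfl⟩ := mem_sup_of_normal_left.mp hg
  refine ⟨⟨n, hn⟩, fun hnP => h.1 (mul_mem hnP hσ), fun τ hτ => ?_⟩
  obtain ⟨k, hk⟩ := h.2 (σ⁻¹ * τ) (mul_mem (inv_mem hσ) hτ)
  refine ⟨k, ?_⟩
  rw [← orderOf_coe, ← hk, coe_mul, mul_assoc, mul_inv_cancel_left]

theorem map [Fact p.Prime] {H : Type*} [Group H] (f : G →* H) (h : IsPElementCoset p P g)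
    (hg : g ∉ f.ker ⊔ P) : IsPElementCoset p (P.map f) (f g) := by
  refine ⟨fun hgP => hg ?_, ?_⟩
  · obtain ⟨σ, hσ, hfσ⟩ := mem_map.mp hgP
    have hker : g * σ⁻¹ ∈ f.ker := by simp [f.mem_ker, hfσ]
    simpa using mul_mem_sup hker hσ
  · rintro _ ⟨τ, hτ, rfl⟩
    obtain ⟨k, hk⟩ := h.2 τ hτ
    have hdvd : orderOf (f g * f τ) ∣ p ^ k := by
      rw [← map_mul, ← hk]
      exact orderOf_map_dvd f _
    obtain ⟨j, -, hj⟩ := (Nat.dvd_prime_pow Fact.out).mp hdvd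
    exact ⟨j, hj⟩

end IsPElementCoset

/-- Let `G` be a finite group, `p` a prime, and `P` a Sylow `p`-subgroup of `G`
admitting a nontrivial coset `gP` (`g ∉ P`) all of whose elements have order a power of `p`.
If `G` has minimal order among finite groups (for any prime) with such a coset, then `G` is a
non-abelian simple group. -/
theorem stmt16 (p : ℕ) (hp : p.Prime) (G : Type) [Group G] [Fintype G]
    (P : Sylow p G) (g : G) (hg : g ∉ P)
    (hcoset : ∀ τ ∈ (P : Subgroup G), ∃ k : ℕ, orderOf (g * τ) = p ^ k)
    (hmin : ∀ (G' : Type) [Group G'] [Fintype G'] (p' : ℕ), p'.Prime →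
      ∀ (P' : Sylow p' G') (g' : G'), g' ∉ P' →
        (∀ τ ∈ (P' : Subgroup G'), ∃ k : ℕ, orderOf (g' * τ) = p' ^ k) →
        Fintype.card G ≤ Fintype.card G') :
    IsSimpleGroup G ∧ ∃ a b : G, a * b ≠ b * a := by
  have : Fact p.Prime := ⟨hp⟩
  have hP : IsPElementCoset p P g := ⟨hg, hcoset⟩
  have hle : ∀ (H : Type) [Group H] [Finite H] (Q : Sylow p H) (h : H),
      IsPElementCoset p Q h → Nat.card G ≤ Nat.card H := by
    intro H _ _ Q h hQ
    have := Fintype.ofFinite H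
    simpa only [Nat.card_eq_fintype_card] using hmin H p hp Q h hQ.1 hQ.2
  have : Nontrivial G := nontrivial_of_ne g 1 fun h => hg (h ▸ one_mem _)
  refine ⟨⟨fun N _ => ?_⟩, exists_mul_ne_mul_of_not_normal hP.not_normal⟩
  by_contra! hN
  by_cases hgN : g ∈ N ⊔ P
  · obtain ⟨n, hn⟩ := hP.subgroupOf hgN
    exact (card_lt_card_of_ne_top hN.2).not_ge (hle N (P.subgroupOfNormal N) n hn)
  · have hq := hP.map (QuotientGroup.mk' N) (by rwa [QuotientGroup.ker_mk'])
    rw [← Sylow.coe_mapSurjective (QuotientGroup.mk'_surjective N)] at hq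
    exact (QuotientGroup.card_quotient_lt_card hN.1).not_ge (hle _ _ _ hq)
end
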